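/- For all a, b ≥ 0 with c ≥ a/e, one has Ξ(a, Θ(a,b)) = b and Θ(a, Ξ(a,c)) = c; i.e., for fixed a ≥ 0, Θ(a,·) is a bijection from [0,∞) to [a/e, ∞) with inverse Ξ(a,·) restricted to [a/e,∞). -/

import Mathlib

noncomputable def H (x : ℝ) : ℝ := x * Real.log x - x + 1

noncomputable def Theta (a b : ℝ) : ℝ :=
  if a = 0 then b / Real.exp 1
  else if b = 0 then a / Real.exp 1
  else if a = b then a
  else Real.exp ((b * Real.log b - a * Real.log a) / (b - a) - 1)

noncomputable def f (r : ℝ) : ℝ :=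
  if r = 0 then (Real.exp 1)⁻¹
  else if r = 1 then 1
  else Real.exp ((r * Real.log r - r + 1) / (r - 1))

noncomputable def g (s : ℝ) : ℝ :=
  if (Real.exp 1)⁻¹ < s then Function.invFunOn f (Set.Ici 0) s else 0

noncomputable def Xi (a c : ℝ) : ℝ :=
  if a = 0 then Real.exp 1 * c else a * g (c / a)

/-! `f r = exp (dslope H 1 r)`, where `H x = x log x - x + 1` is strictly convex on `[0, ∞)`
with `H 1 = H' 1 = 0`. Slopes of a strictly convex function from a fixed point increase, so `f`
is a continuous strictly increasing map of `[0, ∞)` onto `[1/e, ∞)` with inverse `g`. For `a > 0`,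
homogeneity gives `Θ(a, b) = a f(b/a)` and `Ξ(a, c) = a g(c/a)`, which reduces everything to `f`
and `g`; for `a = 0`, `Θ(0, ·)` and `Ξ(0, ·)` are multiplication by `1/e` and by `e`. -/

open Real Set Filter InformationTheory

theorem StrictConvexOn.strictMonoOn_dslope {S : Set ℝ} {φ : ℝ → ℝ} {a : ℝ}
    (hφ : StrictConvexOn ℝ S φ) (ha : a ∈ S) (hd : DifferentiableAt ℝ φ a) :
    StrictMonoOn (dslope φ a) S := by
  intro x hx y hy hxy
  rcases eq_or_ne x a with rfl | hxa
  · rw [dslope_same, dslope_of_ne _ (ne_of_gt hxy)]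
    exact hφ.deriv_lt_slope hx hy hxy hd
  rcases eq_or_ne y a with rfl | hya
  · rw [dslope_same, dslope_of_ne _ hxa, slope_comm]
    exact hφ.slope_lt_deriv hx hy hxy hd
  rw [dslope_of_ne _ hxa, dslope_of_ne _ hya, slope_def_field, slope_def_field]
  exact hφ.secant_strict_mono ha hx hy hxa hya hxy

theorem continuous_dslope {φ : ℝ → ℝ} {a : ℝ} (hc : Continuous φ) (hd : DifferentiableAt ℝ φ a) :
    Continuous (dslope φ a) :=
  continuousOn_univ.1 <| (continuousOn_dslope univ_mem).2 ⟨hc.continuousOn, hd⟩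

lemma H_eq_klFun : H = klFun := by
  funext x
  rw [H, klFun_apply]
  ring

lemma hasDerivAt_H_one : HasDerivAt H 0 1 := by
  simpa [H_eq_klFun] using hasDerivAt_klFun one_ne_zero

lemma f_eq_exp_dslope (r : ℝ) : f r = exp (dslope H 1 r) := by
  rcases eq_or_ne r 1 with rfl | hr1
  · simp [f, dslope_same, hasDerivAt_H_one.deriv]
  rw [dslope_of_ne _ hr1, slope_def_field, H_eq_klFun, klFun_one, sub_zero, klFun_apply]
  rcases eq_or_ne r 0 with rfl | hr0
  · simp [f, exp_neg]
  · simp only [f, if_neg hr0, if_neg hr1]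
    ring_nf

lemma log_sub_one_le_dslope_H {r : ℝ} (hr : 1 < r) : log r - 1 ≤ dslope H 1 r := by
  rw [dslope_of_ne _ hr.ne', slope_def_field, le_div_iff₀ (sub_pos.2 hr)]
  have hlog : 0 ≤ log r := log_nonneg hr.le
  simp only [H, log_one, mul_zero]
  nlinarith

lemma tendsto_dslope_H_atTop : Tendsto (dslope H 1) atTop atTop :=
  tendsto_atTop_mono' _ ((eventually_gt_atTop 1).mono fun _ => log_sub_one_le_dslope_H)
    (tendsto_atTop_add_const_right _ (-1) tendsto_log_atTop)

lemma f_zero : f 0 = (exp 1)⁻¹ := by simp [f]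

lemma strictMonoOn_f : StrictMonoOn f (Ici 0) := fun x hx y hy hxy => by
  simpa only [f_eq_exp_dslope, exp_lt_exp] using
    (H_eq_klFun ▸ strictConvexOn_klFun).strictMonoOn_dslope (mem_Ici.2 zero_le_one)
      hasDerivAt_H_one.differentiableAt hx hy hxy

lemma continuous_f : Continuous f := by
  simp only [funext f_eq_exp_dslope]
  exact continuous_exp.comp <| continuous_dslope (H_eq_klFun ▸ continuous_klFun)
    hasDerivAt_H_one.differentiableAt

lemma tendsto_f_atTop : Tendsto f atTop atTop := by
  rw [funext f_eq_exp_dslope]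
  exact tendsto_exp_atTop.comp tendsto_dslope_H_atTop

lemma bijOn_f : BijOn f (Ici 0) (Ici (exp 1)⁻¹) :=
  ⟨fun _ hr => f_zero ▸ strictMonoOn_f.monotoneOn self_mem_Ici hr hr, strictMonoOn_f.injOn,
    f_zero ▸ intermediate_value_Ici continuous_f.continuousOn tendsto_f_atTop⟩

lemma g_eqOn_invFunOn : EqOn g (Function.invFunOn f (Ici 0)) (Ici (exp 1)⁻¹) := by
  intro s hs
  rcases (mem_Ici.1 hs).eq_or_lt with rfl | hs
  · rw [g, if_neg (lt_irrefl _), ← f_zero, bijOn_f.invOn_invFunOn.1 self_mem_Ici]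
  · rw [g, if_pos hs]

lemma invOn_g_f : InvOn g f (Ici 0) (Ici (exp 1)⁻¹) :=
  ⟨bijOn_f.invOn_invFunOn.1.congr_left bijOn_f.mapsTo g_eqOn_invFunOn.symm,
    bijOn_f.invOn_invFunOn.2.congr_left g_eqOn_invFunOn.symm⟩

lemma mapsTo_g : MapsTo g (Ici (exp 1)⁻¹) (Ici 0) :=
  bijOn_f.surjOn.mapsTo_invFunOn.congr g_eqOn_invFunOn.symm

lemma Theta_eq_mul_f {a b : ℝ} (ha : 0 < a) (hb : 0 ≤ b) : Theta a b = a * f (b / a) := by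
  rcases hb.eq_or_lt with rfl | hb
  · simp [Theta, ha.ne', f_zero, div_eq_mul_inv]
  rcases eq_or_ne a b with rfl | hab
  · simp [Theta, ha.ne', f]
  have hr0 : b / a ≠ 0 := div_ne_zero hb.ne' ha.ne'
  have hr1 : b / a ≠ 1 := fun h => hab ((div_eq_one_iff_eq ha.ne').1 h).symm
  have hexponent : (b * log b - a * log a) / (b - a) - 1 =
      log a + (b / a * log (b / a) - b / a + 1) / (b / a - 1) := by
    rw [log_div hb.ne' ha.ne']
    field_simp [sub_ne_zero.2 hab.symm, sub_ne_zero.2 hr1]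
    ring
  rw [Theta, if_neg ha.ne', if_neg hb.ne', if_neg hab, f, if_neg hr0, if_neg hr1,
    hexponent, exp_add, exp_log ha]

lemma div_mem_Ici_inv_exp {a c : ℝ} (ha : 0 < a) (hc : a / exp 1 ≤ c) :
    c / a ∈ Ici (exp 1)⁻¹ := by
  rwa [mem_Ici, le_div_iff₀ ha, ← div_eq_inv_mul]

lemma invOn_Xi_Theta {a : ℝ} (ha : 0 ≤ a) :
    InvOn (Xi a) (Theta a) (Ici 0) (Ici (a / exp 1)) := by
  rcases ha.eq_or_lt with rfl | ha
  · constructor <;> intro x _ <;> simp only [Theta, Xi, if_true] <;> field_simp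
  constructor
  · intro b hb
    rw [Theta_eq_mul_f ha hb, Xi, if_neg ha.ne', mul_div_cancel_left₀ _ ha.ne',
      invOn_g_f.1 (div_nonneg hb ha.le), mul_div_cancel₀ _ ha.ne']
  · intro c hc
    have hs := div_mem_Ici_inv_exp ha hc
    rw [Xi, if_neg ha.ne', Theta_eq_mul_f ha (mul_nonneg ha.le (mapsTo_g hs)),
      mul_div_cancel_left₀ _ ha.ne', invOn_g_f.2 hs, mul_div_cancel₀ _ ha.ne']

lemma mapsTo_Theta {a : ℝ} (ha : 0 ≤ a) : MapsTo (Theta a) (Ici 0) (Ici (a / exp 1)) := by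
  intro b hb
  rcases ha.eq_or_lt with rfl | ha
  · simpa [Theta] using div_nonneg hb (exp_pos 1).le
  rw [mem_Ici, Theta_eq_mul_f ha hb, div_eq_mul_inv]
  exact mul_le_mul_of_nonneg_left (bijOn_f.mapsTo (div_nonneg hb ha.le)) ha.le

lemma mapsTo_Xi {a : ℝ} (ha : 0 ≤ a) : MapsTo (Xi a) (Ici (a / exp 1)) (Ici 0) := by
  intro c hc
  rcases ha.eq_or_lt with rfl | ha
  · rw [mem_Ici, zero_div] at hc
    simpa [Xi] using mul_nonneg (exp_pos 1).le hc
  rw [mem_Ici, Xi, if_neg ha.ne']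
  exact mul_nonneg ha.le (mapsTo_g (div_mem_Ici_inv_exp ha hc))

/-- Invertibility: `Ξ(a, Θ(a,b)) = b`, `Θ(a, Ξ(a,c)) = c` for `c ≥ a/e`, and `Θ(a,·)`
is a bijection from `[0,∞)` onto `[a/e, ∞)`. -/
theorem theta_xi_inverse (a : ℝ) (ha : 0 ≤ a) :
    (∀ b : ℝ, 0 ≤ b → Xi a (Theta a b) = b) ∧
    (∀ c : ℝ, a / Real.exp 1 ≤ c → Theta a (Xi a c) = c) ∧
    Set.BijOn (Theta a) (Set.Ici (0:ℝ)) (Set.Ici (a / Real.exp 1)) :=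
  have hinv := invOn_Xi_Theta ha
  ⟨fun _ hb => hinv.1 hb, fun _ hc => hinv.2 hc, hinv.bijOn (mapsTo_Theta ha) (mapsTo_Xi ha)⟩
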